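/- arXiv:1212.6908 — 5 statements merged into one kernel-verified Lean document; each statement's English description precedes it below -/
import Mathlib

section
/- Let V be countable, E = {(y,z) : r(y,z) > 0}, μ a probability on V with ⟨μ,r⟩ = ∞. Then for every summable flow Q : E → ℝ≥0, ∑_{(y,z)∈E} Φ(Q(y,z), μ(y)r(y,z)) = ∞, where Φ(q,p) = q log(q/p) − (q−p) for q,p>0, Φ(0,p)=p, Φ(q,0)=∞ for q>0. -/
open scoped ENNReal

/-- The extended rate function `Φ : [0,∞) × [0,∞) → [0,∞]`:
`Φ(q,p) = q log(q/p) - (q-p)` for `q,p > 0`, `Φ(0,p) = p`, `Φ(q,0) = ∞` for `q > 0`. -/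
noncomputable def PhiE (q p : ℝ) : ℝ≥0∞ :=
  if q = 0 then ENNReal.ofReal p
  else if p = 0 then ⊤
  else ENNReal.ofReal (q * Real.log (q / p) - (q - p))

lemma log_bound (q p : ℝ) (hq : 0 < q) (hp : 0 < p) :
    q * Real.log (p / q) ≤ p / 2 + 2 * q := by
  have hpq : 0 < p / q := div_pos hp hq
  have h1 : Real.log (p / q) ≤ 2 * Real.sqrt (p / q) := by
    have h := Real.log_le_sub_one_of_pos (Real.sqrt_pos.2 hpq)
    have h2 : Real.log (Real.sqrt (p / q)) = Real.log (p / q) / 2 :=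
      Real.log_sqrt hpq.le
    nlinarith [Real.sqrt_nonneg (p/q)]
  have h3 : q * Real.log (p / q) ≤ 2 * (Real.sqrt p * Real.sqrt q) := by
    have he : q * (2 * Real.sqrt (p / q)) = 2 * (Real.sqrt p * Real.sqrt q) := by
      rw [Real.sqrt_div hp.le,
        show q * (2 * (Real.sqrt p / Real.sqrt q)) = 2 * Real.sqrt p * (q / Real.sqrt q) by ring,
        Real.div_sqrt]
      ring
    nlinarith [Real.sqrt_nonneg (p/q), h1, hq]
  have h4 : 2 * (Real.sqrt p * Real.sqrt q) ≤ p / 2 + 2 * q := by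
    nlinarith [sq_nonneg (Real.sqrt p - 2 * Real.sqrt q), Real.sq_sqrt hp.le,
      Real.sq_sqrt hq.le, Real.sqrt_nonneg p, Real.sqrt_nonneg q]
  linarith

lemma key (q p : ℝ) (hq : 0 ≤ q) (hp : 0 ≤ p) :
    ENNReal.ofReal (p / 2) ≤ PhiE q p + ENNReal.ofReal (3 * q) := by
  unfold PhiE
  rcases eq_or_lt_of_le hq with hq0 | hq0
  · simp only [← hq0, if_pos rfl]
    calc ENNReal.ofReal (p/2) ≤ ENNReal.ofReal p := by
          apply ENNReal.ofReal_le_ofReal; linarith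
      _ ≤ _ := le_self_add
  · rw [if_neg hq0.ne']
    rcases eq_or_lt_of_le hp with hp0 | hp0
    · rw [if_pos hp0.symm]; simp
    · rw [if_neg hp0.ne']
      calc ENNReal.ofReal (p/2)
          ≤ ENNReal.ofReal ((q * Real.log (q / p) - (q - p)) + 3 * q) := by
            apply ENNReal.ofReal_le_ofReal
            have hl : Real.log (q / p) = - Real.log (p / q) := by
              rw [← Real.log_inv, inv_div]
            rw [hl]
            have := log_bound q p hq0 hp0
            nlinarith
        _ ≤ _ := ENNReal.ofReal_add_le

theorem stmt_9 (V : Type*) [Countable V]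
    (r : V → V → ℝ) (hr0 : ∀ x y, 0 ≤ r x y) (hrd : ∀ x, r x x = 0)
    (E : Set (V × V)) (hE : E = {p : V × V | p.1 ≠ p.2 ∧ 0 < r p.1 p.2})
    (μ : V → ℝ) (hμ0 : ∀ x, 0 ≤ μ x) (hμ1 : ∑' x, μ x = 1)
    (hμr : ¬ Summable fun p : V × V => μ p.1 * r p.1 p.2)
    (Q : V → V → ℝ) (hQ0 : ∀ y z, 0 ≤ Q y z)
    (hQsupp : ∀ y z, (y, z) ∉ E → Q y z = 0)
    (hQsum : Summable fun p : V × V => Q p.1 p.2) :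
    (∑' p : V × V, PhiE (Q p.1 p.2) (μ p.1 * r p.1 p.2)) = ⊤ := by
  by_contra h
  -- the Q-side sum is finite
  have hQtop : (∑' p : V × V, ENNReal.ofReal (3 * Q p.1 p.2)) ≠ ⊤ := by
    rw [← ENNReal.ofReal_tsum_of_nonneg (fun p => mul_nonneg (by norm_num) (hQ0 _ _)) (hQsum.mul_left 3)]
    exact ENNReal.ofReal_ne_top
  -- the μr-side sum is infinite
  have hμtop : (∑' p : V × V, ENNReal.ofReal (μ p.1 * r p.1 p.2 / 2)) = ⊤ := by
    by_contra h2
    have hs := ENNReal.summable_toReal h2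
    apply hμr
    have : Summable fun p : V × V => μ p.1 * r p.1 p.2 / 2 := by
      convert hs using 2 with p
      rw [ENNReal.toReal_ofReal (div_nonneg (mul_nonneg (hμ0 _) (hr0 _ _)) two_pos.le)]
    simpa using this.mul_right 2
  have hle : (∑' p : V × V, ENNReal.ofReal (μ p.1 * r p.1 p.2 / 2)) ≤
      (∑' p : V × V, PhiE (Q p.1 p.2) (μ p.1 * r p.1 p.2)) +
      (∑' p : V × V, ENNReal.ofReal (3 * Q p.1 p.2)) := by
    rw [← ENNReal.tsum_add]
    exact ENNReal.tsum_le_tsum fun p =>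
      key _ _ (hQ0 _ _) (mul_nonneg (hμ0 _) (hr0 _ _))
  rw [hμtop] at hle
  exact (ENNReal.add_ne_top.2 ⟨h, hQtop⟩) (top_le_iff.1 hle)
end

section
/- Let V be countable with jump rates r satisfying the detailed balance condition π(y)r(y,z) = π(z)r(z,y) for a probability π, and let μ be a probability on V with ⟨μ,r⟩ < ∞. Define the symmetric flow Q*(y,z) = √(μ(y)μ(z)r(y,z)r(z,y)). Then Q* is summable, divergence-free, and ∑_{(y,z)∈E} Φ(Q*(y,z), μ(y)r(y,z)) = (1/2)∑_{y,z} (√(μ(y)r(y,z)) − √(μ(z)r(z,y)))². -/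
open scoped ENNReal

lemma phi_nonneg {q p : ℝ} (hq : 0 < q) (hp : 0 < p) :
    0 ≤ q * Real.log (q / p) - (q - p) := by
  have h := Real.log_le_sub_one_of_pos (show 0 < p / q by positivity)
  have hlog : Real.log (p / q) = - Real.log (q / p) := by
    rw [← Real.log_inv, inv_div]
  rw [hlog] at h
  have h2 := mul_le_mul_of_nonneg_left h hq.le
  have h3 : q * (p / q) = p := by field_simp
  nlinarith

lemma phi_pair {a b : ℝ} (ha : 0 ≤ a) (hb : 0 ≤ b) :
    PhiE (Real.sqrt (a * b)) a + PhiE (Real.sqrt (a * b)) b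
      = ENNReal.ofReal ((Real.sqrt a - Real.sqrt b) ^ 2) := by
  rcases ha.eq_or_lt with rfl | ha'
  · simp [PhiE, Real.sq_sqrt hb, neg_sq]
  rcases hb.eq_or_lt with rfl | hb'
  · simp [PhiE, Real.sq_sqrt ha'.le]
  have hab : 0 < a * b := mul_pos ha' hb'
  have hq : 0 < Real.sqrt (a * b) := Real.sqrt_pos.mpr hab
  set q := Real.sqrt (a * b) with hqdef
  have hq2 : q ^ 2 = a * b := Real.sq_sqrt hab.le
  rw [PhiE, if_neg hq.ne', if_neg ha'.ne', PhiE, if_neg hq.ne', if_neg hb'.ne',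
    ← ENNReal.ofReal_add (phi_nonneg hq ha') (phi_nonneg hq hb')]
  congr 1
  have hlog : Real.log (q / a) + Real.log (q / b) = 0 := by
    rw [← Real.log_mul (by positivity) (by positivity)]
    have : q / a * (q / b) = 1 := by
      field_simp
      nlinarith
    rw [this, Real.log_one]
  have hsab : Real.sqrt a * Real.sqrt b = q := (Real.sqrt_mul ha'.le b).symm
  have h2 : (Real.sqrt a - Real.sqrt b) ^ 2 = a + b - 2 * q := by
    have := Real.sq_sqrt ha'.le
    have := Real.sq_sqrt hb'.le
    nlinarith
  nlinarith [hlog, h2, mul_comm q (Real.log (q/a))]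

theorem stmt_10 (V : Type*) [Countable V]
    (r : V → V → ℝ) (hr0 : ∀ x y, 0 ≤ r x y) (hrd : ∀ x, r x x = 0)
    (π : V → ℝ) (hπ0 : ∀ x, 0 ≤ π x) (hπ1 : ∑' x, π x = 1)
    (hrev : ∀ y z : V, π y * r y z = π z * r z y)
    (μ : V → ℝ) (hμ0 : ∀ x, 0 ≤ μ x) (hμ1 : ∑' x, μ x = 1)
    (hμr : Summable fun p : V × V => μ p.1 * r p.1 p.2)
    (Q : V → V → ℝ)
    (hQdef : ∀ y z : V, Q y z = Real.sqrt (μ y * μ z * r y z * r z y)) :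
    (Summable fun p : V × V => Q p.1 p.2) ∧
    (∀ y : V, (∑' z, Q y z) = ∑' z, Q z y) ∧
    (∑' p : V × V, PhiE (Q p.1 p.2) (μ p.1 * r p.1 p.2)) =
      ENNReal.ofReal ((1 / 2) * ∑' p : V × V,
        (Real.sqrt (μ p.1 * r p.1 p.2) - Real.sqrt (μ p.2 * r p.2 p.1)) ^ 2) := by
  have ha0 : ∀ y z : V, 0 ≤ μ y * r y z := fun y z => mul_nonneg (hμ0 _) (hr0 _ _)
  have hb : Summable (fun p : V × V => μ p.2 * r p.2 p.1) :=
    (Equiv.prodComm V V).summable_iff.mpr hμr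
  have hQab : ∀ y z : V, Q y z = Real.sqrt ((μ y * r y z) * (μ z * r z y)) := by
    intro y z; rw [hQdef y z]; congr 1; ring
  have hQle : ∀ y z : V, Q y z ≤ μ y * r y z + μ z * r z y := by
    intro y z
    rw [hQab, Real.sqrt_mul (ha0 y z)]
    nlinarith [Real.sq_sqrt (ha0 y z), Real.sq_sqrt (ha0 z y),
      sq_nonneg (Real.sqrt (μ y * r y z) - Real.sqrt (μ z * r z y)),
      Real.sqrt_nonneg (μ y * r y z), Real.sqrt_nonneg (μ z * r z y)]
  have hQ0 : ∀ y z : V, 0 ≤ Q y z := by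
    intro y z; rw [hQab]; exact Real.sqrt_nonneg _
  have hsum : Summable fun p : V × V => Q p.1 p.2 :=
    Summable.of_nonneg_of_le (fun p => hQ0 p.1 p.2) (fun p => hQle p.1 p.2)
      (hμr.add hb)
  have hQsymm : ∀ y z : V, Q y z = Q z y := by
    intro y z; rw [hQdef, hQdef]; congr 1; ring
  refine ⟨hsum, fun y => tsum_congr fun z => hQsymm y z, ?_⟩
  set g : V × V → ℝ :=
    fun p => (Real.sqrt (μ p.1 * r p.1 p.2) - Real.sqrt (μ p.2 * r p.2 p.1)) ^ 2
    with hg_def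
  have hg0 : ∀ p, 0 ≤ g p := fun p => sq_nonneg _
  have hgsum : Summable g := by
    apply Summable.of_nonneg_of_le hg0 (fun p => ?_) (hμr.add hb)
    simp only [hg_def]
    nlinarith [Real.sq_sqrt (ha0 p.1 p.2), Real.sq_sqrt (ha0 p.2 p.1),
      Real.sqrt_nonneg (μ p.1 * r p.1 p.2), Real.sqrt_nonneg (μ p.2 * r p.2 p.1),
      mul_nonneg (Real.sqrt_nonneg (μ p.1 * r p.1 p.2)) (Real.sqrt_nonneg (μ p.2 * r p.2 p.1))]
  set F : V × V → ℝ≥0∞ := fun p => PhiE (Q p.1 p.2) (μ p.1 * r p.1 p.2) with hF_def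
  have hswap : ∑' p : V × V, F p = ∑' p : V × V, F (p.2, p.1) :=
    ((Equiv.prodComm V V).tsum_eq F).symm
  have hpair : ∀ p : V × V, F p + F (p.2, p.1) = ENNReal.ofReal (g p) := by
    intro p
    have h1 : F p = PhiE (Real.sqrt ((μ p.1 * r p.1 p.2) * (μ p.2 * r p.2 p.1)))
        (μ p.1 * r p.1 p.2) := by rw [hF_def]; simp only; rw [hQab]
    have h2 : F (p.2, p.1) = PhiE (Real.sqrt ((μ p.1 * r p.1 p.2) * (μ p.2 * r p.2 p.1)))
        (μ p.2 * r p.2 p.1) := by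
      rw [hF_def]; simp only; rw [hQab]; rw [mul_comm (μ p.2 * r p.2 p.1)]
    rw [h1, h2, phi_pair (ha0 p.1 p.2) (ha0 p.2 p.1)]
  have key : 2 * ∑' p : V × V, F p = ENNReal.ofReal (∑' p : V × V, g p) := by
    rw [two_mul]
    nth_rewrite 2 [hswap]
    rw [← ENNReal.tsum_add]
    rw [ENNReal.ofReal_tsum_of_nonneg hg0 hgsum]
    exact tsum_congr hpair
  have h2r : (2 : ℝ≥0∞) * ENNReal.ofReal ((1 / 2) * ∑' p : V × V, g p)
      = ENNReal.ofReal (∑' p : V × V, g p) := by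
    rw [← ENNReal.ofReal_ofNat 2, ← ENNReal.ofReal_mul (by norm_num)]
    congr 1; ring
  have := key.trans h2r.symm
  exact (ENNReal.mul_right_inj (by norm_num) (by norm_num)).mp this
end

section
/- Let V be a finite set with irreducible rates r and unique invariant probability π. For a probability μ on V, define J₁(μ) = sup over g : V → ℝ of ∑_{(y,z)∈E} μ(y)r(y,z)(1 − e^{g(z)−g(y)}). Then J₁ is convex in μ, J₁(π) = 0, and for divergence-free Q ≥ 0 and all g, ∑_{(y,z)∈E} Φ(Q(y,z), μ(y)r(y,z)) ≥ ∑_{(y,z)∈E} μ(y)r(y,z)(1 − e^{g(z)−g(y)}); consequently inf over divergence-free Q of ∑ Φ(Q(y,z), μ(y)r(y,z)) ≥ J₁(μ). -/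
open scoped ENNReal

/-- The Donsker–Varadhan functional
`J₁(μ) = sup_g ∑_{y,z} μ(y) r(y,z) (1 - e^{g(z)-g(y)})`. -/
noncomputable def J1 {V : Type*} [Fintype V] (r : V → V → ℝ) (μ : V → ℝ) : ℝ :=
  ⨆ g : V → ℝ, ∑ y : V, ∑ z : V, μ y * r y z * (1 - Real.exp (g z - g y))

/-! The Legendre duality is applied edgewise with `f = g z - g y`; the terms `Q (g z - g y)` it
produces cancel after summation because `Q` is divergence free. Taking `Q = p = π r`, which is
divergence free by stationarity and has `Φ(p, p) = 0`, gives `J₁(π) ≤ 0`. -/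

theorem ConvexOn.ciSup {ι E : Type*} [Nonempty ι] [AddCommMonoid E] [Module ℝ E] {s : Set E}
    {f : ι → E → ℝ} (hf : ∀ i, ConvexOn ℝ s (f i))
    (hbdd : ∀ x ∈ s, BddAbove (Set.range fun i => f i x)) :
    ConvexOn ℝ s fun x => ⨆ i, f i x := by
  refine ⟨(hf (Classical.arbitrary ι)).1, fun x hx y hy a b ha hb hab => ciSup_le fun i => ?_⟩
  show f i (a • x + b • y) ≤ a • (⨆ i, f i x) + b • ⨆ i, f i y
  calc f i (a • x + b • y) ≤ a • f i x + b • f i y := (hf i).2 hx hy ha hb hab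
    _ ≤ a • (⨆ i, f i x) + b • ⨆ i, f i y := by
      gcongr
      exacts [le_ciSup (hbdd x hx) i, le_ciSup (hbdd y hy) i]

theorem PhiE_self (q : ℝ) : PhiE q q = 0 := by
  by_cases hq : q = 0 <;> simp [PhiE, hq]

/-- Legendre duality `f q - Φ*(f) ≤ Φ(q, p)` with `Φ*(f) = p (e^f - 1)`. -/
theorem mul_one_sub_exp_add_mul_le_toReal_PhiE {q p : ℝ} (f : ℝ) (hq : 0 ≤ q) (hp : 0 ≤ p)
    (hfin : PhiE q p ≠ ⊤) : p * (1 - Real.exp f) + q * f ≤ (PhiE q p).toReal := by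
  unfold PhiE at hfin ⊢
  split_ifs at hfin ⊢ with hq0 hp0
  · subst hq0
    rw [ENNReal.toReal_ofReal hp]
    nlinarith [Real.exp_pos f]
  · exact absurd rfl hfin
  · have hq' : 0 < q := lt_of_le_of_ne hq (Ne.symm hq0)
    have hp' : 0 < p := lt_of_le_of_ne hp (Ne.symm hp0)
    -- `p e^f = q e^t` with `t = f - log (q / p)`, and `e^t ≥ 1 + t`
    have hexp : p * Real.exp f = q * Real.exp (f - Real.log (q / p)) := by
      rw [Real.exp_sub, Real.exp_log (by positivity)]
      field_simp
    have := mul_le_mul_of_nonneg_left (Real.add_one_le_exp (f - Real.log (q / p))) hq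
    rw [ENNReal.toReal_ofReal']
    exact le_max_of_le_left (by nlinarith)

section

variable {V : Type*} [Fintype V]

theorem sum_sum_mul_sub_eq_zero_of_divergence_free (Q : V → V → ℝ) (g : V → ℝ)
    (hQ : ∀ y, ∑ z, Q y z = ∑ z, Q z y) :
    ∑ y, ∑ z, Q y z * (g z - g y) = 0 := by
  have hswap : ∑ y, ∑ z, Q y z * g z = ∑ y, ∑ z, Q y z * g y := by
    rw [Finset.sum_comm]
    refine Finset.sum_congr rfl fun z _ => ?_
    rw [← Finset.sum_mul, ← Finset.sum_mul, hQ z]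
  simp only [mul_sub, Finset.sum_sub_distrib, hswap, sub_self]

theorem sum_sum_mul_one_sub_exp_le_toReal_sum_sum_PhiE (p Q : V → V → ℝ)
    (hp : ∀ y z, 0 ≤ p y z) (hQ : ∀ y z, 0 ≤ Q y z) (hdiv : ∀ y, ∑ z, Q y z = ∑ z, Q z y)
    (hfin : ∑ y, ∑ z, PhiE (Q y z) (p y z) ≠ ⊤) (g : V → ℝ) :
    ∑ y, ∑ z, p y z * (1 - Real.exp (g z - g y)) ≤ (∑ y, ∑ z, PhiE (Q y z) (p y z)).toReal := by
  have hfin' : ∀ y z, PhiE (Q y z) (p y z) ≠ ⊤ := fun y z =>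
    ENNReal.sum_ne_top.1 (ENNReal.sum_ne_top.1 hfin y (Finset.mem_univ y)) z (Finset.mem_univ z)
  calc ∑ y, ∑ z, p y z * (1 - Real.exp (g z - g y))
      = ∑ y, ∑ z, (p y z * (1 - Real.exp (g z - g y)) + Q y z * (g z - g y)) := by
        simp only [Finset.sum_add_distrib, sum_sum_mul_sub_eq_zero_of_divergence_free Q g hdiv,
          add_zero]
    _ ≤ ∑ y, ∑ z, (PhiE (Q y z) (p y z)).toReal := by
        gcongr with y _ z _
        exact mul_one_sub_exp_add_mul_le_toReal_PhiE _ (hQ y z) (hp y z) (hfin' y z)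
    _ = (∑ y, ∑ z, PhiE (Q y z) (p y z)).toReal := by
        rw [ENNReal.toReal_sum fun y _ => ENNReal.sum_ne_top.1 hfin y (Finset.mem_univ y)]
        exact Finset.sum_congr rfl fun y _ => (ENNReal.toReal_sum fun z _ => hfin' y z).symm

variable {r : V → V → ℝ} {μ : V → ℝ}

theorem bddAbove_range_J1 (hr : ∀ x y, 0 ≤ r x y) (hμ : ∀ y, 0 ≤ μ y) :
    BddAbove (Set.range fun g : V → ℝ => ∑ y, ∑ z, μ y * r y z * (1 - Real.exp (g z - g y))) := by
  refine ⟨∑ y, ∑ z, μ y * r y z, ?_⟩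
  rintro _ ⟨g, rfl⟩
  refine Finset.sum_le_sum fun y _ => Finset.sum_le_sum fun z _ => ?_
  exact mul_le_of_le_one_right (mul_nonneg (hμ y) (hr y z))
    (sub_le_self _ (Real.exp_pos _).le)

theorem J1_nonneg (hr : ∀ x y, 0 ≤ r x y) (hμ : ∀ y, 0 ≤ μ y) : 0 ≤ J1 r μ :=
  le_ciSup_of_le (bddAbove_range_J1 hr hμ) 0 (by simp)

theorem J1_le_toReal_sum_sum_PhiE (hr : ∀ x y, 0 ≤ r x y) (hμ : ∀ y, 0 ≤ μ y)
    (Q : V → V → ℝ) (hQ : ∀ y z, 0 ≤ Q y z) (hdiv : ∀ y, ∑ z, Q y z = ∑ z, Q z y)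
    (hfin : ∑ y, ∑ z, PhiE (Q y z) (μ y * r y z) ≠ ⊤) :
    J1 r μ ≤ (∑ y, ∑ z, PhiE (Q y z) (μ y * r y z)).toReal :=
  ciSup_le <| sum_sum_mul_one_sub_exp_le_toReal_sum_sum_PhiE (fun y z => μ y * r y z) Q
    (fun y z => mul_nonneg (hμ y) (hr y z)) hQ hdiv hfin

theorem convexOn_J1 (hr : ∀ x y, 0 ≤ r x y) : ConvexOn ℝ (stdSimplex ℝ V) (J1 r) := by
  refine ConvexOn.ciSup (fun g => ?_) fun μ hμ => bddAbove_range_J1 hr hμ.1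
  let L : (V → ℝ) →ₗ[ℝ] ℝ :=
    { toFun := fun μ => ∑ y, ∑ z, μ y * r y z * (1 - Real.exp (g z - g y))
      map_add' := fun μ ν => by simp only [Pi.add_apply, add_mul, Finset.sum_add_distrib]
      map_smul' := fun c μ => by simp only [Pi.smul_apply, smul_eq_mul, Finset.mul_sum,
        RingHom.id_apply, mul_assoc] }
  exact L.convexOn (convex_stdSimplex ℝ V)

end

theorem stmt_16_general (V : Type*) [Fintype V]
    (r : V → V → ℝ) (hr0 : ∀ x y, 0 ≤ r x y)
    (π : V → ℝ) (hπ : π ∈ stdSimplex ℝ V)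
    (hstat : ∀ x : V, (∑ y : V, π x * r x y) = ∑ y : V, π y * r y x) :
    ConvexOn ℝ (stdSimplex ℝ V) (J1 r) ∧
    J1 r π = 0 ∧
    (∀ μ ∈ stdSimplex ℝ V, ∀ Q : V → V → ℝ,
      (∀ y z, 0 ≤ Q y z) → (∀ y z, ¬ (y ≠ z ∧ 0 < r y z) → Q y z = 0) →
      (∀ y : V, (∑ z : V, Q y z) = ∑ z : V, Q z y) →
      (∀ g : V → ℝ,
        ENNReal.ofReal (∑ y : V, ∑ z : V, μ y * r y z * (1 - Real.exp (g z - g y)))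
          ≤ ∑ y : V, ∑ z : V, PhiE (Q y z) (μ y * r y z)) ∧
      ENNReal.ofReal (J1 r μ) ≤ ∑ y : V, ∑ z : V, PhiE (Q y z) (μ y * r y z)) := by
  refine ⟨convexOn_J1 hr0, ?_, fun μ hμ Q hQ _ hdiv => ?_⟩
  · have hπr : ∀ y z, 0 ≤ π y * r y z := fun y z => mul_nonneg (hπ.1 y) (hr0 y z)
    refine le_antisymm ?_ (J1_nonneg hr0 hπ.1)
    simpa [PhiE_self] using
      J1_le_toReal_sum_sum_PhiE hr0 hπ.1 (fun y z => π y * r y z) hπr hstat (by simp [PhiE_self])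
  by_cases hfin : ∑ y, ∑ z, PhiE (Q y z) (μ y * r y z) = ⊤
  · simp only [hfin, le_top, implies_true, and_self]
  refine ⟨fun g => ?_, ?_⟩
  · exact (ENNReal.ofReal_le_iff_le_toReal hfin).2 <|
      sum_sum_mul_one_sub_exp_le_toReal_sum_sum_PhiE _ Q
        (fun y z => mul_nonneg (hμ.1 y) (hr0 y z)) hQ hdiv hfin g
  · exact (ENNReal.ofReal_le_iff_le_toReal hfin).2 <|
      J1_le_toReal_sum_sum_PhiE hr0 hμ.1 Q hQ hdiv hfin

theorem stmt_16 (V : Type*) [Fintype V]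
    (r : V → V → ℝ) (hr0 : ∀ x y, 0 ≤ r x y) (hrd : ∀ x, r x x = 0)
    (hirr : ∀ x y : V, x ≠ y → Relation.TransGen (fun a b => 0 < r a b) x y)
    (π : V → ℝ) (hπ : π ∈ stdSimplex ℝ V)
    (hstat : ∀ x : V, (∑ y : V, π x * r x y) = ∑ y : V, π y * r y x) :
    ConvexOn ℝ (stdSimplex ℝ V) (J1 r) ∧
    J1 r π = 0 ∧
    (∀ μ ∈ stdSimplex ℝ V, ∀ Q : V → V → ℝ,
      (∀ y z, 0 ≤ Q y z) → (∀ y z, ¬ (y ≠ z ∧ 0 < r y z) → Q y z = 0) →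
      (∀ y : V, (∑ z : V, Q y z) = ∑ z : V, Q z y) →
      (∀ g : V → ℝ,
        ENNReal.ofReal (∑ y : V, ∑ z : V, μ y * r y z * (1 - Real.exp (g z - g y)))
          ≤ ∑ y : V, ∑ z : V, PhiE (Q y z) (μ y * r y z)) ∧
      ENNReal.ofReal (J1 r μ) ≤ ∑ y : V, ∑ z : V, PhiE (Q y z) (μ y * r y z)) :=
  stmt_16_general V r hr0 π hπ hstat
end

section
/- Let V be a finite set, E ⊆ V×V, and fix μ with support condition Q^μ(y,z) = μ(y)r(y,z). Suppose Q* minimizes Q ↦ ∑_{(y,z)∈E} Φ(Q(y,z), Q^μ(y,z)) over divergence-free nonnegative flows, and suppose Q*(y,z) > 0 on all edges of a self-avoiding cycle C. Then ∑_{(v,w)∈C} log(Q*(v,w)/(μ(v)r(v,w))) = 0. -/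
open scoped ENNReal

/-- A self-avoiding oriented cycle in the graph `(V, E)`. -/
structure SACycle (V : Type*) (E : Set (V × V)) where
  n : ℕ
  c : Fin (n + 1) → V
  inj : Function.Injective c
  mem : ∀ i : Fin (n + 1), (c i, c (i + 1)) ∈ E

/-! The zero flow is admissible, so the optimal cost is finite; hence `μ y * r y z > 0` on every
edge carrying flow, in particular along `C`. Pushing an extra amount `α` of flow around `C` keeps
the flow admissible for small `|α|`, and only changes the finitely many finite terms on `C`.
Writing `Φ(q, p) = p · klFun (q / p)`, the cost is then a differentiable real function of `α`
with a local minimum at `0`, and its derivative there is the sum of `log (Q / (μ r))` along `C`. -/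

open Filter Topology InformationTheory

lemma PhiE_eq_ofReal_mul_klFun {q p : ℝ} (hq : q ≠ 0) (hp : p ≠ 0) :
    PhiE q p = ENNReal.ofReal (p * klFun (q / p)) := by
  rw [PhiE, if_neg hq, if_neg hp, klFun_apply]
  congr 1
  field_simp
  ring

lemma toReal_PhiE {q p : ℝ} (hq : 0 < q) (hp : 0 < p) :
    (PhiE q p).toReal = p * klFun (q / p) := by
  rw [PhiE_eq_ofReal_mul_klFun hq.ne' hp.ne',
    ENNReal.toReal_ofReal (mul_nonneg hp.le (klFun_nonneg (div_pos hq hp).le))]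

lemma PhiE_ne_top {q p : ℝ} (hp : 0 < p) : PhiE q p ≠ ⊤ := by
  unfold PhiE
  split_ifs <;> simp_all

lemma pos_of_PhiE_ne_top {q p : ℝ} (hq : 0 < q) (hp : 0 ≤ p) (h : PhiE q p ≠ ⊤) :
    0 < p := by
  refine hp.lt_of_ne' fun hp0 => h ?_
  simp [PhiE, hq.ne', hp0]

lemma eventually_pos_add_mul {q : ℝ} (hq : 0 < q) (u : ℝ) :
    ∀ᶠ α in 𝓝 (0 : ℝ), 0 < q + α * u := by
  have hcont : Continuous fun α : ℝ => q + α * u := by fun_prop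
  exact hcont.continuousAt.eventually (lt_mem_nhds (by simpa using hq))

lemma hasDerivAt_toReal_PhiE_add_mul {q p : ℝ} (hq : 0 < q) (hp : 0 < p) (u : ℝ) :
    HasDerivAt (fun α => (PhiE (q + α * u) p).toReal) (u * Real.log (q / p)) 0 := by
  have hlin : HasDerivAt (fun α : ℝ => (q + α * u) / p) (u / p) 0 := by
    simpa using ((hasDerivAt_mul_const u).const_add q).div_const p
  have hphi := ((hasDerivAt_klFun (div_pos hq hp).ne').comp_of_eq 0 hlin
    (by simp)).const_mul p
  rw [show p * (Real.log (q / p) * (u / p)) = u * Real.log (q / p) by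
    field_simp] at hphi
  refine hphi.congr_of_eventuallyEq ?_
  filter_upwards [eventually_pos_add_mul hq u] with α hα
  exact toReal_PhiE hα hp

theorem sum_mul_log_eq_zero_of_eventually_le {ι : Type*} [Fintype ι] {q p u : ι → ℝ}
    (hu : ∀ j, u j = 0 ∨ (0 < q j ∧ 0 < p j)) (hfin : ∀ j, PhiE (q j) (p j) ≠ ⊤)
    (hle : ∀ᶠ α in 𝓝 (0 : ℝ),
      ∑ j, PhiE (q j) (p j) ≤ ∑ j, PhiE (q j + α * u j) (p j)) :
    ∑ j, u j * Real.log (q j / p j) = 0 := by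
  have hfin' : ∀ α j, PhiE (q j + α * u j) (p j) ≠ ⊤ := fun α j => by
    rcases hu j with h | ⟨-, hp⟩
    · simpa [h] using hfin j
    · exact PhiE_ne_top hp
  let g : ℝ → ℝ := fun α => ∑ j, (PhiE (q j + α * u j) (p j)).toReal
  have hmin : IsLocalMin g 0 := hle.mono fun α h => by
    simp only [g, zero_mul, add_zero]
    rw [← ENNReal.toReal_sum fun j _ => hfin j, ← ENNReal.toReal_sum fun j _ => hfin' α j]
    exact ENNReal.toReal_mono (ENNReal.sum_ne_top.2 fun j _ => hfin' α j) h
  have hderiv : HasDerivAt g (∑ j, u j * Real.log (q j / p j)) 0 :=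
    HasDerivAt.fun_sum fun j _ => by
      rcases hu j with h | ⟨hq, hp⟩
      · simpa [h] using hasDerivAt_const (0 : ℝ) (PhiE (q j) (p j)).toReal
      · exact hasDerivAt_toReal_PhiE_add_mul hq hp (u j)
  exact hmin.hasDerivAt_eq_zero hderiv

namespace SACycle

variable {V : Type*} {E : Set (V × V)} (C : SACycle V E) [DecidableEq V]

-- Counting edges rather than testing membership makes conservation hold for any closed walk.
def unitFlow (y z : V) : ℝ := ∑ i, if C.c i = y ∧ C.c (i + 1) = z then 1 else 0

theorem unitFlow_edge (i : Fin (C.n + 1)) : C.unitFlow (C.c i) (C.c (i + 1)) = 1 := by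
  rw [unitFlow, Finset.sum_eq_single i (fun j _ hji => if_neg fun h => hji (C.inj h.1))
    (fun hi => absurd (Finset.mem_univ i) hi), if_pos ⟨rfl, rfl⟩]

theorem unitFlow_eq_zero_or_exists (y z : V) :
    C.unitFlow y z = 0 ∨ ∃ i, C.c i = y ∧ C.c (i + 1) = z := by
  by_cases h : ∃ i, C.c i = y ∧ C.c (i + 1) = z
  · exact Or.inr h
  · exact Or.inl (Finset.sum_eq_zero fun i _ => if_neg fun hi => h ⟨i, hi⟩)

theorem unitFlow_eq_zero_of_notMem {y z : V} (h : (y, z) ∉ E) : C.unitFlow y z = 0 :=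
  (C.unitFlow_eq_zero_or_exists y z).resolve_right fun ⟨i, hy, hz⟩ => h (hy ▸ hz ▸ C.mem i)

theorem add_mul_unitFlow_nonneg {Q : V → V → ℝ} (hQ : ∀ y z, 0 ≤ Q y z) {α : ℝ}
    (hα : ∀ i, 0 ≤ Q (C.c i) (C.c (i + 1)) + α) (y z : V) :
    0 ≤ Q y z + α * C.unitFlow y z := by
  rcases C.unitFlow_eq_zero_or_exists y z with h | ⟨i, rfl, rfl⟩
  · simpa [h] using hQ y z
  · simpa [C.unitFlow_edge i] using hα i

variable [Fintype V]

theorem sum_sum_unitFlow_mul (f : V → V → ℝ) :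
    ∑ y, ∑ z, C.unitFlow y z * f y z = ∑ i, f (C.c i) (C.c (i + 1)) := by
  simp only [unitFlow, Finset.sum_mul, ite_mul, one_mul, zero_mul]
  rw [Finset.sum_congr rfl fun y _ => Finset.sum_comm, Finset.sum_comm]
  simp [ite_and]

theorem sum_unitFlow_out_eq_in (y : V) : ∑ z, C.unitFlow y z = ∑ z, C.unitFlow z y := by
  have hout := C.sum_sum_unitFlow_mul fun a _ => if a = y then 1 else 0
  have hin := C.sum_sum_unitFlow_mul fun _ b => if b = y then 1 else 0
  simp only [mul_ite, mul_one, mul_zero, Finset.sum_ite_irrel, Finset.sum_const_zero,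
    Finset.sum_ite_eq', Finset.mem_univ, if_true] at hout hin
  rw [hout, hin]
  exact (Fintype.sum_equiv (Equiv.addRight 1) _ _ fun i => rfl).symm

end SACycle

theorem stmt_17_general (V : Type*) [Fintype V] (E : Set (V × V))
    (μ : V → ℝ) (hμ0 : ∀ x, 0 ≤ μ x)
    (r : V → V → ℝ) (hr0 : ∀ y z, 0 ≤ r y z)
    (Q : V → V → ℝ) (hQ0 : ∀ y z, 0 ≤ Q y z)
    (hQsupp : ∀ y z, (y, z) ∉ E → Q y z = 0)
    (hQdiv : ∀ y : V, (∑ z : V, Q y z) = ∑ z : V, Q z y)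
    (hmin : ∀ Q' : V → V → ℝ, (∀ y z, 0 ≤ Q' y z) →
      (∀ y z, (y, z) ∉ E → Q' y z = 0) →
      (∀ y : V, (∑ z : V, Q' y z) = ∑ z : V, Q' z y) →
      (∑ y : V, ∑ z : V, PhiE (Q y z) (μ y * r y z)) ≤
        ∑ y : V, ∑ z : V, PhiE (Q' y z) (μ y * r y z))
    (C : SACycle V E) (hCpos : ∀ i : Fin (C.n + 1), 0 < Q (C.c i) (C.c (i + 1))) :
    (∑ i : Fin (C.n + 1),
      Real.log (Q (C.c i) (C.c (i + 1)) / (μ (C.c i) * r (C.c i) (C.c (i + 1))))) = 0 := by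
  classical
  have hfin : ∀ y z, PhiE (Q y z) (μ y * r y z) ≠ ⊤ := by
    have hcost := hmin 0 (fun _ _ => le_rfl) (fun _ _ _ => rfl) (fun _ => rfl)
    have htop := ne_top_of_le_ne_top (by simp [PhiE]) hcost
    exact fun y z => ENNReal.sum_ne_top.1 (ENNReal.sum_ne_top.1 htop y (Finset.mem_univ _)) z
      (Finset.mem_univ _)
  have hu : ∀ y z, C.unitFlow y z = 0 ∨ (0 < Q y z ∧ 0 < μ y * r y z) := by
    refine fun y z => (C.unitFlow_eq_zero_or_exists y z).imp_right ?_
    rintro ⟨i, rfl, rfl⟩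
    exact ⟨hCpos i, pos_of_PhiE_ne_top (hCpos i) (mul_nonneg (hμ0 _) (hr0 _ _)) (hfin _ _)⟩
  have hle : ∀ᶠ α in 𝓝 (0 : ℝ), (∑ y, ∑ z, PhiE (Q y z) (μ y * r y z)) ≤
      ∑ y, ∑ z, PhiE (Q y z + α * C.unitFlow y z) (μ y * r y z) := by
    filter_upwards [eventually_all.2 fun i => eventually_pos_add_mul (hCpos i) 1] with α hα
    refine hmin _ (C.add_mul_unitFlow_nonneg hQ0 fun i => by simpa using (hα i).le)
      (fun y z hyz => by simp [hQsupp y z hyz, C.unitFlow_eq_zero_of_notMem hyz]) fun y => ?_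
    simp only [Finset.sum_add_distrib, ← Finset.mul_sum, hQdiv, C.sum_unitFlow_out_eq_in]
  have key := sum_mul_log_eq_zero_of_eventually_le (q := fun e : V × V => Q e.1 e.2)
    (p := fun e => μ e.1 * r e.1 e.2) (u := fun e => C.unitFlow e.1 e.2)
    (fun e => hu e.1 e.2) (fun e => hfin e.1 e.2) (by simpa only [Fintype.sum_prod_type] using hle)
  rwa [Fintype.sum_prod_type, C.sum_sum_unitFlow_mul] at key

theorem stmt_17 (V : Type*) [Fintype V] (E : Set (V × V))
    (hE : ∀ x : V, (x, x) ∉ E)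
    (μ : V → ℝ) (hμ0 : ∀ x, 0 ≤ μ x)
    (r : V → V → ℝ) (hr0 : ∀ y z, 0 ≤ r y z)
    (Q : V → V → ℝ) (hQ0 : ∀ y z, 0 ≤ Q y z)
    (hQsupp : ∀ y z, (y, z) ∉ E → Q y z = 0)
    (hQdiv : ∀ y : V, (∑ z : V, Q y z) = ∑ z : V, Q z y)
    (hmin : ∀ Q' : V → V → ℝ, (∀ y z, 0 ≤ Q' y z) →
      (∀ y z, (y, z) ∉ E → Q' y z = 0) →
      (∀ y : V, (∑ z : V, Q' y z) = ∑ z : V, Q' z y) →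
      (∑ y : V, ∑ z : V, PhiE (Q y z) (μ y * r y z)) ≤
        ∑ y : V, ∑ z : V, PhiE (Q' y z) (μ y * r y z))
    (C : SACycle V E) (hCpos : ∀ i : Fin (C.n + 1), 0 < Q (C.c i) (C.c (i + 1))) :
    (∑ i : Fin (C.n + 1),
      Real.log (Q (C.c i) (C.c (i + 1)) / (μ (C.c i) * r (C.c i) (C.c (i + 1))))) = 0 :=
  stmt_17_general V E μ hμ0 r hr0 Q hQ0 hQsupp hQdiv hmin C hCpos
end

section
/- Let V be a countable set with rates r, and μ a probability with ⟨μ,r⟩ < ∞. Define V_μ, E_μ to be the vertices/edges where μ(y)r(y,z) > 0, and let ∼ be the relation on V_μ: y ∼ z iff there exist oriented paths in (V_μ,E_μ) from y to z and from z to y. Then ∼ restricted to vertices mutually connected is an equivalence relation, and for any summable divergence-free flow Q with ∑ Φ(Q(y,z), μ(y)r(y,z)) < ∞ and any edge (y,z) with Q(y,z) > 0, it holds that y ∼ z (in particular (y,z) ∈ E_μ and y, z lie in the same equivalence class). -/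
/-!
Since `Φ(q, 0) = ∞` for `q > 0`, a flow of finite cost is carried by `E_μ`. If `Q y z > 0`, let
`A` be the set of vertices reachable from `z` along edges charged by `Q`. No flow leaves `A`; as
`Q` is conserved and of finite total mass, the flow into `A` equals the flow out of it, so no flow
enters `A` from outside either. The edge `(y, z)` enters `z ∈ A`, hence `y ∈ A`: `z` reaches `y`.
-/

open scoped ENNReal

theorem ne_zero_of_tsum_PhiE_ne_top {ι : Type*} {q p : ι → ℝ}
    (h : ∑' i, PhiE (q i) (p i) ≠ ⊤) {i : ι} (hi : q i ≠ 0) : p i ≠ 0 := fun hp =>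
  ENNReal.ne_top_of_tsum_ne_top h i (by simp [PhiE, hi, hp])

section Flow

variable {ι : Type*}

theorem ENNReal.flow_in_eq_zero_of_no_flow_out {Q : ι → ι → ℝ≥0∞}
    (hQ : ∑' a, ∑' b, Q a b ≠ ∞) (hdiv : ∀ a, ∑' b, Q a b = ∑' b, Q b a) {A : Set ι}
    (hA : ∀ a ∈ A, ∀ b ∉ A, Q a b = 0) {a b : ι} (ha : a ∉ A) (hb : b ∈ A) : Q a b = 0 := by
  set out := ∑' a, ∑' b, A.indicator 1 a * Q a b
  have out_ne_top : out ≠ ∞ := by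
    refine ne_top_of_le_ne_top hQ (ENNReal.tsum_le_tsum fun a => ENNReal.tsum_le_tsum fun b => ?_)
    by_cases ha : a ∈ A <;> simp [ha]
  have balance : ∑' a, ∑' b, A.indicator 1 b * Q a b = out := by
    rw [ENNReal.tsum_comm]
    simp_rw [out, ENNReal.tsum_mul_left, hdiv]
  have split : ∀ a b, A.indicator 1 b * Q a b =
      A.indicator 1 a * Q a b + Aᶜ.indicator 1 a * A.indicator 1 b * Q a b := by
    intro a b
    by_cases ha : a ∈ A <;> by_cases hb : b ∈ A <;> simp [ha, hb, hA]
  have cross : ∑' a, ∑' b, Aᶜ.indicator 1 a * A.indicator 1 b * Q a b = 0 := by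
    simp_rw [split, ENNReal.tsum_add] at balance
    exact (ENNReal.add_right_inj out_ne_top).1 (balance.trans (add_zero out).symm)
  simpa [ha, hb] using ENNReal.tsum_eq_zero.1 (ENNReal.tsum_eq_zero.1 cross a) b

variable {Q : ι → ι → ℝ}

theorem flow_in_eq_zero_of_no_flow_out (hQ0 : ∀ a b, 0 ≤ Q a b)
    (hQ : Summable fun p : ι × ι => Q p.1 p.2) (hdiv : ∀ a, ∑' b, Q a b = ∑' b, Q b a) {A : Set ι}
    (hA : ∀ a ∈ A, ∀ b ∉ A, Q a b = 0) {a b : ι} (ha : a ∉ A) (hb : b ∈ A) : Q a b = 0 := by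
  have ofReal_tsum_row (a : ι) : ∑' b, ENNReal.ofReal (Q a b) = ENNReal.ofReal (∑' b, Q a b) :=
    (ENNReal.ofReal_tsum_of_nonneg (hQ0 a) (hQ.prod_factor a)).symm
  have ofReal_tsum_col (b : ι) : ∑' a, ENNReal.ofReal (Q a b) = ENNReal.ofReal (∑' a, Q a b) :=
    (ENNReal.ofReal_tsum_of_nonneg (hQ0 · b) (hQ.prod_symm.prod_factor b)).symm
  have hfin : ∑' a, ∑' b, ENNReal.ofReal (Q a b) ≠ ∞ := by
    rw [← ENNReal.tsum_prod, ← ENNReal.ofReal_tsum_of_nonneg (fun p : ι × ι => hQ0 p.1 p.2) hQ]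
    exact ENNReal.ofReal_ne_top
  have hab := ENNReal.flow_in_eq_zero_of_no_flow_out hfin
    (fun a => by rw [ofReal_tsum_row, ofReal_tsum_col, hdiv])
    (fun a ha b hb => by simp [hA a ha b hb]) ha hb
  exact le_antisymm (ENNReal.ofReal_eq_zero.1 hab) (hQ0 a b)

theorem reflTransGen_pos_back_of_pos (hQ0 : ∀ a b, 0 ≤ Q a b)
    (hQ : Summable fun p : ι × ι => Q p.1 p.2) (hdiv : ∀ a, ∑' b, Q a b = ∑' b, Q b a) {y z : ι}
    (hyz : 0 < Q y z) :
    Relation.ReflTransGen (fun a b => 0 < Q a b) z y := by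
  by_contra hzy
  let A := {w | Relation.ReflTransGen (fun a b => 0 < Q a b) z w}
  have hA : ∀ a ∈ A, ∀ b ∉ A, Q a b = 0 := fun a ha b hb =>
    ((hQ0 a b).eq_or_lt.resolve_right fun hab => hb (ha.tail hab)).symm
  exact hyz.ne' (flow_in_eq_zero_of_no_flow_out hQ0 hQ hdiv hA hzy Relation.ReflTransGen.refl)

end Flow

theorem stmt_19_general (V : Type*)
    (r : V → V → ℝ) (hr0 : ∀ x y, 0 ≤ r x y)
    (μ : V → ℝ) (hμ0 : ∀ x, 0 ≤ μ x)
    -- `Eμ` is the edge relation of the graph `(V_μ, E_μ)`, and `R y z` states that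
    -- there is an oriented path from `y` to `z` in `(V_μ, E_μ)`.
    (Eμ : V → V → Prop) (hEμ : ∀ y z, Eμ y z ↔ 0 < μ y * r y z)
    (R : V → V → Prop) (hR : ∀ y z, R y z ↔ Relation.ReflTransGen Eμ y z) :
    Equivalence (fun y z => R y z ∧ R z y) ∧
    (∀ Q : V → V → ℝ, (∀ y z, 0 ≤ Q y z) →
      (∀ y z, ¬ (y ≠ z ∧ 0 < r y z) → Q y z = 0) →
      (Summable fun p : V × V => Q p.1 p.2) →
      (∀ y : V, (∑' z, Q y z) = ∑' z, Q z y) →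
      (∑' p : V × V, PhiE (Q p.1 p.2) (μ p.1 * r p.1 p.2)) ≠ ⊤ →
      ∀ y z : V, 0 < Q y z → (Eμ y z ∧ R y z ∧ R z y)) := by
  obtain rfl : R = Relation.ReflTransGen Eμ := funext₂ fun y z => propext (hR y z)
  refine ⟨⟨AntisymmRel.refl _, AntisymmRel.symm, AntisymmRel.trans⟩,
    fun Q hQ0 _ hQ hdiv hΦ y z hyz => ?_⟩
  have hedge : ∀ a b, 0 < Q a b → Eμ a b := fun a b hab =>
    (hEμ a b).2 <| (mul_nonneg (hμ0 a) (hr0 a b)).lt_of_ne'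
      (ne_zero_of_tsum_PhiE_ne_top hΦ (i := (a, b)) hab.ne')
  exact ⟨hedge y z hyz, .single (hedge y z hyz),
    Relation.ReflTransGen.mono hedge _ _ (reflTransGen_pos_back_of_pos hQ0 hQ hdiv hyz)⟩

theorem stmt_19 (V : Type*) [Countable V]
    (r : V → V → ℝ) (hr0 : ∀ x y, 0 ≤ r x y) (hrd : ∀ x, r x x = 0)
    (μ : V → ℝ) (hμ0 : ∀ x, 0 ≤ μ x) (hμ1 : ∑' x, μ x = 1)
    (hμr : Summable fun p : V × V => μ p.1 * r p.1 p.2)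
    -- `Eμ` is the edge relation of the graph `(V_μ, E_μ)`, and `R y z` states that
    -- there is an oriented path from `y` to `z` in `(V_μ, E_μ)`.
    (Eμ : V → V → Prop) (hEμ : ∀ y z, Eμ y z ↔ 0 < μ y * r y z)
    (R : V → V → Prop) (hR : ∀ y z, R y z ↔ Relation.ReflTransGen Eμ y z) :
    Equivalence (fun y z => R y z ∧ R z y) ∧
    (∀ Q : V → V → ℝ, (∀ y z, 0 ≤ Q y z) →
      (∀ y z, ¬ (y ≠ z ∧ 0 < r y z) → Q y z = 0) →
      (Summable fun p : V × V => Q p.1 p.2) →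
      (∀ y : V, (∑' z, Q y z) = ∑' z, Q z y) →
      (∑' p : V × V, PhiE (Q p.1 p.2) (μ p.1 * r p.1 p.2)) ≠ ⊤ →
      ∀ y z : V, 0 < Q y z → (Eμ y z ∧ R y z ∧ R z y)) :=
  stmt_19_general V r hr0 μ hμ0 Eμ hEμ R hR
end
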